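/- arXiv:2510.14650 — 2 statements merged into one kernel-verified Lean document; each statement's English description precedes it below -/
import Mathlib

section
/- Let n > m ≥ 2 be integers, let A_1, …, A_{m−1} be a skew Clifford system on ℝ^{n+1}, set c = (m−1)/(n−1), and fix y ∈ ℝ^{n+1} with ‖y‖ = 1. Define F̃ : ℝ^{n+1} → ℝ by F̃(x) = ⟨x,y⟩² + Σ_{q=1}^{m−1} ⟨A_q x, y⟩² − c‖x‖². Then at every point x with F̃(x) = 0, Hsiang's minimality identity holds: ⟨D(‖DF̃‖²)(x), DF̃(x)⟩ = 2‖DF̃(x)‖² · Δ^E F̃(x), where D denotes the Euclidean gradient and Δ^E the Euclidean Laplacian. (Hence the slice cone {F̃ = 0} is a minimal cone, i.e., the slices of the minimal FKM isoparametric hypersurface are minimal hypersurfaces in S^n.) -/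
open Matrix
open scoped RealInnerProductSpace BigOperators

noncomputable section

/-- A skew Clifford system `A_1, …, A_{m-1}` on `ℝ^N`: skew-symmetric matrices with
`A_p A_q + A_q A_p = -2 δ_{pq} Id`. -/
def IsSkewCliffordSystem {N m : ℕ} (A : Fin (m - 1) → Matrix (Fin N) (Fin N) ℝ) : Prop :=
  (∀ p q, A p * A q + A q * A p =
      if p = q then (-2 : ℝ) • (1 : Matrix (Fin N) (Fin N) ℝ) else 0) ∧
  (∀ p, (A p)ᵀ = -A p)

/-- The action of a matrix on Euclidean space. -/
def act {N : ℕ} (A : Matrix (Fin N) (Fin N) ℝ) (x : EuclideanSpace ℝ (Fin N)) :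
    EuclideanSpace ℝ (Fin N) :=
  Matrix.toEuclideanLin A x

/-- The splitting form of the FKM isoparametric polynomial:
`F(x,y) = ⟨x,y⟩² + Σ_q ⟨A_q x, y⟩²`. -/
def FKM {N m : ℕ} (A : Fin (m - 1) → Matrix (Fin N) (Fin N) ℝ)
    (x y : EuclideanSpace ℝ (Fin N)) : ℝ :=
  ⟪x, y⟫ ^ 2 + ∑ q, ⟪act (A q) x, y⟫ ^ 2

/-! The Clifford relations make `y, A_1 y, …, A_{m-1} y` orthonormal, and skewness gives
`⟪A_q x, y⟫² = ⟪A_q y, x⟫²`, so `F̃(x) = ⟪P x, x⟫ - c‖x‖²` with `P` the orthogonal projection onto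
their `m`-dimensional span: `{F̃ = 0}` is the cone over `S^{m-1}(√c) × S^{n-m}(√(1-c))`.

For a quadratic form `⟪T x, x⟫` with `T` self-adjoint, the gradient is `2 T x`, its squared norm
is `4 ⟪T² x, x⟫` and the Laplacian is `2 tr T`, so Hsiang's identity reduces to
`⟪T³ x, x⟫ = tr T ⟪T² x, x⟫`. For `T = P - c` with `P² = P` and `⟪P x, x⟫ = c‖x‖²` one finds
`⟪T³ x, x⟫ = c(1-c)(1-2c)‖x‖²` and `⟪T² x, x⟫ = c(1-c)‖x‖²`, while `tr T = m - c(n+1)` equals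
`1 - 2c` exactly when `c = (m-1)/(n-1)`. -/

open InnerProductSpace

theorem iteratedDeriv_two_quadratic_zero (a b d : ℝ) :
    iteratedDeriv 2 (fun t : ℝ => a + b * t + d * t ^ 2) 0 = 2 * d := by
  have hderiv : deriv (fun t : ℝ => a + b * t + d * t ^ 2) = fun t => b + d * (2 * t) := by
    ext t
    rw [deriv_fun_add (by fun_prop) (by fun_prop), deriv_const_add,
      deriv_const_mul _ (by fun_prop), deriv_const_mul _ (by fun_prop)]
    simp
  rw [iteratedDeriv_succ, iteratedDeriv_one, hderiv]
  simp [mul_comm]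

section QuadraticForm

variable {E : Type*} [NormedAddCommGroup E] [InnerProductSpace ℝ E]

theorem iteratedDeriv_two_inner_apply_self_line (T : E →L[ℝ] E) (x v : E) :
    iteratedDeriv 2 (fun t : ℝ => ⟪T (x + t • v), x + t • v⟫) 0 = 2 * ⟪T v, v⟫ := by
  have hexpand : (fun t : ℝ => ⟪T (x + t • v), x + t • v⟫) =
      fun t => ⟪T x, x⟫ + (⟪T x, v⟫ + ⟪T v, x⟫) * t + ⟪T v, v⟫ * t ^ 2 := by
    ext t
    simp only [map_add, map_smul, inner_add_left, inner_add_right, real_inner_smul_left,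
      real_inner_smul_right]
    ring
  rw [hexpand, iteratedDeriv_two_quadratic_zero]

theorem sum_iteratedDeriv_two_inner_apply_self_line [FiniteDimensional ℝ E] {ι : Type*}
    [Fintype ι] (b : OrthonormalBasis ι ℝ E) (T : E →L[ℝ] E) (x : E) :
    ∑ i, iteratedDeriv 2 (fun t : ℝ => ⟪T (x + t • b i), x + t • b i⟫) 0 =
      2 * LinearMap.trace ℝ E T := by
  simp only [iteratedDeriv_two_inner_apply_self_line, ← Finset.mul_sum,
    LinearMap.trace_eq_sum_inner _ b, real_inner_comm (b _)]
  rfl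

variable [CompleteSpace E] {T : E →L[ℝ] E}

theorem IsSelfAdjoint.gradient_inner_apply_self (hT : IsSelfAdjoint T) (x : E) :
    gradient (fun z => ⟪T z, z⟫) x = (2 : ℝ) • T x := by
  have hquad : T.reApplyInnerSelf = fun z => ⟪T z, z⟫ := by
    ext z
    simp [ContinuousLinearMap.reApplyInnerSelf_apply]
  have h := (hT.isSymmetric.hasStrictFDerivAt_reApplyInnerSelf x).hasFDerivAt
  rw [hquad, ← ofNat_smul_eq_nsmul (R := ℝ)] at h
  rw [h.hasGradientAt.gradient, ← map_smul]
  exact (toDual ℝ E).symm_apply_apply _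

theorem IsSelfAdjoint.norm_sq_gradient_inner_apply_self (hT : IsSelfAdjoint T) (x : E) :
    ‖gradient (fun z => ⟪T z, z⟫) x‖ ^ 2 = ⟪((4 : ℝ) • T ^ 2) x, x⟫ := by
  rw [hT.gradient_inner_apply_self, ← real_inner_self_eq_norm_sq, _root_.smul_apply, pow_two,
    mul_apply_eq_comp, real_inner_smul_left, real_inner_smul_left, real_inner_smul_right,
    hT.isSymmetric.apply_clm, real_inner_comm]
  ring

theorem IsSelfAdjoint.inner_gradient_norm_sq_gradient_inner_apply_self (hT : IsSelfAdjoint T)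
    (x : E) :
    ⟪gradient (fun x => ‖gradient (fun z => ⟪T z, z⟫) x‖ ^ 2) x,
        gradient (fun z => ⟪T z, z⟫) x⟫ = 16 * ⟪(T ^ 3) x, x⟫ := by
  have hT2 : IsSelfAdjoint ((4 : ℝ) • T ^ 2) := (IsSelfAdjoint.all _).smul (hT.pow 2)
  simp_rw [hT.norm_sq_gradient_inner_apply_self]
  rw [hT2.gradient_inner_apply_self, hT.gradient_inner_apply_self, _root_.smul_apply,
    real_inner_smul_left, real_inner_smul_left, real_inner_smul_right,
    ← hT.isSymmetric.apply_clm, ← mul_apply_eq_comp, ← pow_succ']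
  ring

theorem IsSelfAdjoint.hsiang_identity_inner_apply_self [FiniteDimensional ℝ E] {ι : Type*}
    [Fintype ι] (hT : IsSelfAdjoint T) (b : OrthonormalBasis ι ℝ E) {x : E}
    (hx : ⟪(T ^ 3) x, x⟫ = LinearMap.trace ℝ E T * ⟪(T ^ 2) x, x⟫) :
    ⟪gradient (fun x => ‖gradient (fun z => ⟪T z, z⟫) x‖ ^ 2) x,
        gradient (fun z => ⟪T z, z⟫) x⟫ =
      2 * ‖gradient (fun z => ⟪T z, z⟫) x‖ ^ 2 *
        ∑ i, iteratedDeriv 2 (fun t : ℝ => ⟪T (x + t • b i), x + t • b i⟫) 0 := by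
  rw [hT.inner_gradient_norm_sq_gradient_inner_apply_self,
    hT.norm_sq_gradient_inner_apply_self, sum_iteratedDeriv_two_inner_apply_self_line,
    _root_.smul_apply, real_inner_smul_left, hx]
  ring

end QuadraticForm

section Projection

variable {E : Type*} [NormedAddCommGroup E] [InnerProductSpace ℝ E]

theorem IsIdempotentElem.inner_pow_three_sub_smul_one_apply {P : E →L[ℝ] E}
    (hP : IsIdempotentElem P) {c : ℝ} {x : E} (hx : ⟪P x, x⟫ = c * ‖x‖ ^ 2) :
    ⟪((P - c • 1 : E →L[ℝ] E) ^ 3) x, x⟫ =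
      (1 - 2 * c) * ⟪((P - c • 1 : E →L[ℝ] E) ^ 2) x, x⟫ := by
  have hPP : ∀ z, P (P z) = P z := fun z => by rw [← mul_apply_eq_comp, hP.eq]
  have hT : ∀ z, (P - c • 1) z = P z - c • z := fun z => by simp
  have hT2 : ((P - c • 1 : E →L[ℝ] E) ^ 2) x = (1 - 2 * c) • P x + c ^ 2 • x := by
    rw [pow_two, mul_apply_eq_comp, hT, hT, map_sub, map_smul, hPP]
    module
  have hT3 : ((P - c • 1 : E →L[ℝ] E) ^ 3) x = (1 - 3 * c + 3 * c ^ 2) • P x - c ^ 3 • x := by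
    rw [pow_succ', mul_apply_eq_comp, hT2, hT, map_add, map_smul, map_smul, hPP]
    module
  rw [hT2, hT3]
  simp only [inner_add_left, inner_sub_left, real_inner_smul_left, hx, real_inner_self_eq_norm_sq]
  ring

theorem trace_sub_smul_one [FiniteDimensional ℝ E] (P : E →L[ℝ] E) (c : ℝ) :
    LinearMap.trace ℝ E (P - c • 1 : E →L[ℝ] E) =
      LinearMap.trace ℝ E P - c * Module.finrank ℝ E := by
  simp

variable {ι : Type*} [Fintype ι] {v : ι → E}

theorem inner_sum_rankOne_self_apply (v : ι → E) (x : E) :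
    ⟪(∑ i, rankOne ℝ (v i) (v i)) x, x⟫ = ∑ i, ⟪v i, x⟫ ^ 2 := by
  simp [sum_inner, real_inner_smul_left, sq]

theorem isSelfAdjoint_sum_rankOne_self [CompleteSpace E] (v : ι → E) :
    IsSelfAdjoint (∑ i, rankOne ℝ (v i) (v i)) := by
  rw [ContinuousLinearMap.isSelfAdjoint_iff_isSymmetric]
  intro x y
  simp [sum_inner, inner_sum, real_inner_smul_right, real_inner_comm, mul_comm]

theorem Orthonormal.isIdempotentElem_sum_rankOne_self (hv : Orthonormal ℝ v) :
    IsIdempotentElem (∑ i, rankOne ℝ (v i) (v i)) := by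
  classical
  simp [IsIdempotentElem, Finset.sum_mul, Finset.mul_sum, ContinuousLinearMap.mul_def,
    rankOne_comp_rankOne, orthonormal_iff_ite.mp hv]

theorem Orthonormal.trace_sum_rankOne_self [FiniteDimensional ℝ E] (hv : Orthonormal ℝ v) :
    LinearMap.trace ℝ E (∑ i, rankOne ℝ (v i) (v i) : E →L[ℝ] E) = Fintype.card ι := by
  simp [trace_rankOne, hv.1]

end Projection

section CliffordCone

variable {E : Type*} [NormedAddCommGroup E] [InnerProductSpace ℝ E] [CompleteSpace E]
  [FiniteDimensional ℝ E]

theorem IsIdempotentElem.hsiang_identity {ι : Type*} [Fintype ι] {P : E →L[ℝ] E}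
    (hP : IsIdempotentElem P) (hPsa : IsSelfAdjoint P) (b : OrthonormalBasis ι ℝ E) {c : ℝ}
    (hc : c * (Module.finrank ℝ E - 2) = LinearMap.trace ℝ E P - 1) {x : E}
    (hx : ⟪P x, x⟫ = c * ‖x‖ ^ 2) :
    ⟪gradient (fun x => ‖gradient (fun z => ⟪P z, z⟫ - c * ‖z‖ ^ 2) x‖ ^ 2) x,
        gradient (fun z => ⟪P z, z⟫ - c * ‖z‖ ^ 2) x⟫ =
      2 * ‖gradient (fun z => ⟪P z, z⟫ - c * ‖z‖ ^ 2) x‖ ^ 2 *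
        ∑ i, iteratedDeriv 2
          (fun t : ℝ => ⟪P (x + t • b i), x + t • b i⟫ - c * ‖x + t • b i‖ ^ 2) 0 := by
  have hquad : ∀ z, ⟪P z, z⟫ - c * ‖z‖ ^ 2 = ⟪(P - c • 1 : E →L[ℝ] E) z, z⟫ := fun z => by
    rw [_root_.sub_apply, _root_.smul_apply, one_apply_eq_self, inner_sub_left,
      real_inner_smul_left, real_inner_self_eq_norm_sq]
  have hT : IsSelfAdjoint (P - c • 1) := hPsa.sub ((IsSelfAdjoint.all c).smul (.one _))
  simp only [hquad]
  refine hT.hsiang_identity_inner_apply_self b ?_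
  rw [hP.inner_pow_three_sub_smul_one_apply hx, trace_sub_smul_one]
  congr 1
  linarith

end CliffordCone

section SkewClifford

variable {E : Type*} [NormedAddCommGroup E] [InnerProductSpace ℝ E] [CompleteSpace E]

theorem inner_apply_left_of_star_eq_neg {a : E →L[ℝ] E} (ha : star a = -a) (x z : E) :
    ⟪a x, z⟫ = -⟪x, a z⟫ := by
  rw [← ContinuousLinearMap.adjoint_inner_right, ← ContinuousLinearMap.star_eq_adjoint, ha,
    _root_.neg_apply, inner_neg_right]

variable {ι : Type*} {a : ι → E →L[ℝ] E}

def cliffordFrame (a : ι → E →L[ℝ] E) (y : E) : Option ι → E :=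
  fun o => o.elim y fun p => a p y

theorem orthonormal_cliffordFrame [DecidableEq ι] (hskew : ∀ p, star (a p) = -a p)
    (hanti : ∀ p q, a p * a q + a q * a p = if p = q then (-2 : ℝ) • 1 else 0)
    {y : E} (hy : ‖y‖ = 1) : Orthonormal ℝ (cliffordFrame a y) := by
  have hyy : ⟪y, y⟫ = 1 := by rw [real_inner_self_eq_norm_sq, hy, one_pow]
  have hay : ∀ p, ⟪a p y, y⟫ = 0 := fun p => by
    linarith [inner_apply_left_of_star_eq_neg (hskew p) y y, real_inner_comm y (a p y)]
  have haa : ∀ p q, ⟪a p y, a q y⟫ = if p = q then 1 else 0 := fun p q => by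
    have hsum : ⟪a p y, a q y⟫ + ⟪a q y, a p y⟫ = -⟪y, (a p * a q + a q * a p) y⟫ := by
      rw [inner_apply_left_of_star_eq_neg (hskew p), inner_apply_left_of_star_eq_neg (hskew q),
        _root_.add_apply, mul_apply_eq_comp, mul_apply_eq_comp, inner_add_right]
      ring
    rw [real_inner_comm (a p y) (a q y), hanti] at hsum
    split_ifs at hsum ⊢
    · rw [_root_.smul_apply, one_apply_eq_self, real_inner_smul_right, hyy] at hsum
      linarith
    · rw [_root_.zero_apply, inner_zero_right] at hsum
      linarith
  rw [orthonormal_iff_ite]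
  rintro (_ | p) (_ | q)
  · simpa [cliffordFrame] using hyy
  · simpa [cliffordFrame, real_inner_comm y] using hay q
  · simpa [cliffordFrame] using hay p
  · simpa [cliffordFrame] using haa p q

theorem sum_inner_cliffordFrame_sq [Fintype ι] (hskew : ∀ p, star (a p) = -a p) (y x : E) :
    ∑ o, ⟪cliffordFrame a y o, x⟫ ^ 2 = ⟪x, y⟫ ^ 2 + ∑ p, ⟪a p x, y⟫ ^ 2 := by
  rw [Fintype.sum_option]
  congr 1
  · rw [cliffordFrame, Option.elim_none, real_inner_comm]
  · refine Finset.sum_congr rfl fun p _ => ?_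
    rw [cliffordFrame, Option.elim_some, inner_apply_left_of_star_eq_neg (hskew p), neg_sq,
      real_inner_comm]

end SkewClifford

theorem IsSkewCliffordSystem.star_toEuclideanCLM {N m : ℕ}
    {A : Fin (m - 1) → Matrix (Fin N) (Fin N) ℝ} (hA : IsSkewCliffordSystem A) (p : Fin (m - 1)) :
    star (toEuclideanCLM (𝕜 := ℝ) (A p)) = -toEuclideanCLM (𝕜 := ℝ) (A p) := by
  rw [← map_star, star_eq_conjTranspose, conjTranspose_eq_transpose_of_trivial, hA.2 p, map_neg]

theorem IsSkewCliffordSystem.toEuclideanCLM_anticomm {N m : ℕ}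
    {A : Fin (m - 1) → Matrix (Fin N) (Fin N) ℝ} (hA : IsSkewCliffordSystem A)
    (p q : Fin (m - 1)) :
    toEuclideanCLM (𝕜 := ℝ) (A p) * toEuclideanCLM (𝕜 := ℝ) (A q) +
        toEuclideanCLM (𝕜 := ℝ) (A q) * toEuclideanCLM (𝕜 := ℝ) (A p) =
      if p = q then (-2 : ℝ) • 1 else 0 := by
  rw [← map_mul, ← map_mul, ← map_add, hA.1 p q]
  split_ifs <;> simp only [map_smul, map_one, map_zero]

/-- for `n > m ≥ 2`, `c = (m−1)/(n−1)` and a fixed unit vector `y`, the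
polynomial `F̃(x) = ⟨x,y⟩² + Σ_q ⟨A_q x, y⟩² − c‖x‖² = F(x,y) − c‖x‖²` satisfies
Hsiang's minimality identity `⟨D(‖DF̃‖²), DF̃⟩ = 2‖DF̃‖² Δ^E F̃` at every point of its
zero locus; here `D` is the Euclidean gradient and `Δ^E` the Euclidean Laplacian
(the sum of the pure second partial derivatives). -/
theorem stmt7 (n m : ℕ) (hm : 2 ≤ m) (hmn : m < n)
    (A : Fin (m - 1) → Matrix (Fin (n + 1)) (Fin (n + 1)) ℝ)
    (hA : IsSkewCliffordSystem A)
    (c : ℝ) (hc : c = ((m : ℝ) - 1) / ((n : ℝ) - 1))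
    (y : EuclideanSpace ℝ (Fin (n + 1))) (hy : ‖y‖ = 1)
    (x : EuclideanSpace ℝ (Fin (n + 1)))
    (hx : FKM A x y - c * ‖x‖ ^ 2 = 0) :
    ⟪gradient (fun x' => ‖gradient (fun x'' => FKM A x'' y - c * ‖x''‖ ^ 2) x'‖ ^ 2) x,
        gradient (fun x'' => FKM A x'' y - c * ‖x''‖ ^ 2) x⟫ =
      2 * ‖gradient (fun x'' => FKM A x'' y - c * ‖x''‖ ^ 2) x‖ ^ 2 *
        ∑ i, iteratedDeriv 2
          (fun t : ℝ =>
            FKM A (x + t • EuclideanSpace.single i (1 : ℝ)) y -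
              c * ‖x + t • EuclideanSpace.single i (1 : ℝ)‖ ^ 2) 0 := by
  set v := cliffordFrame (fun q => toEuclideanCLM (𝕜 := ℝ) (A q)) y
  have hv : Orthonormal ℝ v :=
    orthonormal_cliffordFrame hA.star_toEuclideanCLM hA.toEuclideanCLM_anticomm hy
  have hFKM : ∀ z, FKM A z y = ⟪(∑ o, rankOne ℝ (v o) (v o)) z, z⟫ := fun z => by
    rw [inner_sum_rankOne_self_apply, sum_inner_cliffordFrame_sq hA.star_toEuclideanCLM]
    rfl
  simp only [hFKM, ← EuclideanSpace.basisFun_apply]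
  refine hv.isIdempotentElem_sum_rankOne_self.hsiang_identity (isSelfAdjoint_sum_rankOne_self v)
    _ ?_ (by rwa [hFKM, sub_eq_zero] at hx)
  have hn : (n : ℝ) - 1 ≠ 0 := by
    rw [sub_ne_zero, Nat.cast_ne_one]
    omega
  rw [hv.trace_sum_rankOne_self, finrank_euclideanSpace_fin, Fintype.card_option,
    Fintype.card_fin, Nat.sub_add_cancel (by omega), hc]
  push_cast
  field_simp
  ring
end
end

section
/- Let n > m ≥ 2 be integers, let A_1, …, A_{m−1} be a skew Clifford system on ℝ^{n+1}, set c = (m−1)/(n−1) and F(x,y) = ⟨x,y⟩² + Σ_{q=1}^{m−1} ⟨A_q x, y⟩². Suppose ‖x‖ = ‖y‖ = 1 and F(x,y) = c, and write B_p = ⟨A_p x, y⟩. Define Y = (⟨x,y⟩y + Σ_p B_p A_pᵀ y − c x, ⟨x,y⟩x + Σ_p B_p A_p x − c y) ∈ ℝ^{n+1} × ℝ^{n+1}. Then ‖Y‖² = 2c(1−c), and Y is orthogonal to both (x,y) and (x,−y). -/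
open Matrix
open scoped RealInnerProductSpace BigOperators

noncomputable section

/-! For a unit vector `x` the relations of a skew Clifford system make `x, A_1 x, …, A_{m-1} x`
orthonormal, so the second component of `Y` is `P y - F • y`, where
`P y = ⟨x,y⟩ x + Σ_p B_p A_p x` is the orthogonal projection of `y` onto their span and
`F = F(x,y) = ⟨P y, y⟩ = ‖P y‖²`. For a unit vector `y` this gives `⟨P y - F • y, y⟩ = 0` and
`‖P y - F • y‖² = F (1 - F)`. The first component of `Y` is the second one for the skew Clifford
system `A_pᵀ = -A_p` with `x` and `y` exchanged, which has the same `F`. -/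

lemma norm_sub_smul_sq_of_inner_eq_norm_sq {E : Type*} [NormedAddCommGroup E]
    [InnerProductSpace ℝ E] {u y : E} (hy : ‖y‖ = 1) (hu : ⟪u, y⟫ = ‖u‖ ^ 2) :
    ‖u - ‖u‖ ^ 2 • y‖ ^ 2 = ‖u‖ ^ 2 * (1 - ‖u‖ ^ 2) := by
  rw [norm_sub_sq_real, real_inner_smul_right, hu, norm_smul, hy, Real.norm_eq_abs, abs_sq]
  ring

section Act
variable {N : ℕ}

@[simp] lemma act_add (A B : Matrix (Fin N) (Fin N) ℝ) (x : EuclideanSpace ℝ (Fin N)) :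
    act (A + B) x = act A x + act B x := by
  simp [act]

@[simp] lemma act_neg (A : Matrix (Fin N) (Fin N) ℝ) (x : EuclideanSpace ℝ (Fin N)) :
    act (-A) x = -act A x := by
  simp [act]

@[simp] lemma act_smul (r : ℝ) (A : Matrix (Fin N) (Fin N) ℝ) (x : EuclideanSpace ℝ (Fin N)) :
    act (r • A) x = r • act A x := by
  simp [act]

@[simp] lemma act_zero (x : EuclideanSpace ℝ (Fin N)) : act 0 x = 0 := by
  simp [act]

@[simp] lemma act_one (x : EuclideanSpace ℝ (Fin N)) : act 1 x = x := by
  simp [act]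

lemma act_mul (A B : Matrix (Fin N) (Fin N) ℝ) (x : EuclideanSpace ℝ (Fin N)) :
    act (A * B) x = act A (act B x) := by
  simp [act, Matrix.toLpLin_apply, Matrix.mulVec_mulVec]

lemma inner_act_left (A : Matrix (Fin N) (Fin N) ℝ) (x z : EuclideanSpace ℝ (Fin N)) :
    ⟪act A x, z⟫ = ⟪x, act Aᵀ z⟫ := by
  rw [act, act, ← conjTranspose_eq_transpose_of_trivial, toEuclideanLin_conjTranspose_eq_adjoint,
    LinearMap.adjoint_inner_right]

end Act

namespace IsSkewCliffordSystem
variable {N m : ℕ} {A : Fin (m - 1) → Matrix (Fin N) (Fin N) ℝ}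

lemma transpose (hA : IsSkewCliffordSystem A) : IsSkewCliffordSystem fun p => (A p)ᵀ := by
  obtain ⟨hmul, hskew⟩ := hA
  refine ⟨fun p q => ?_, fun p => ?_⟩
  · simp only [hskew, neg_mul_neg, hmul]
  · change (A p)ᵀᵀ = -(A p)ᵀ
    rw [transpose_transpose, hskew, neg_neg]

lemma inner_act_left (hA : IsSkewCliffordSystem A) (p : Fin (m - 1))
    (x z : EuclideanSpace ℝ (Fin N)) : ⟪act (A p) x, z⟫ = -⟪x, act (A p) z⟫ := by
  rw [_root_.inner_act_left, hA.2, act_neg, inner_neg_right]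

lemma inner_act_self (hA : IsSkewCliffordSystem A) (p : Fin (m - 1))
    (z : EuclideanSpace ℝ (Fin N)) : ⟪act (A p) z, z⟫ = 0 := by
  linarith [hA.inner_act_left p z z, real_inner_comm z (act (A p) z)]

lemma inner_act_act (hA : IsSkewCliffordSystem A) (p q : Fin (m - 1))
    (z : EuclideanSpace ℝ (Fin N)) :
    ⟪act (A p) z, act (A q) z⟫ = if p = q then ‖z‖ ^ 2 else 0 := by
  have hsum : ⟪act (A p) z, act (A q) z⟫ + ⟪act (A q) z, act (A p) z⟫ =
      -⟪z, act (A p * A q + A q * A p) z⟫ := by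
    rw [hA.inner_act_left, hA.inner_act_left, act_add, act_mul, act_mul, inner_add_right]
    ring
  rw [real_inner_comm (act (A p) z), hA.1] at hsum
  split_ifs at hsum ⊢
  · simp only [act_smul, act_one, real_inner_smul_right, real_inner_self_eq_norm_sq] at hsum
    linarith
  · simp only [act_zero, inner_zero_right] at hsum
    linarith

lemma orthonormal_act (hA : IsSkewCliffordSystem A) {x : EuclideanSpace ℝ (Fin N)}
    (hx : ‖x‖ = 1) : Orthonormal ℝ fun p => act (A p) x := by
  rw [orthonormal_iff_ite]
  intro p q
  rw [hA.inner_act_act, hx, one_pow]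

end IsSkewCliffordSystem

section Projection
variable {N m : ℕ}

/-- The orthogonal projection of `y` onto `span {x, A_1 x, …, A_{m-1} x}` when `x` is a unit
vector and `A` a skew Clifford system. -/
def fkmProj (A : Fin (m - 1) → Matrix (Fin N) (Fin N) ℝ) (x y : EuclideanSpace ℝ (Fin N)) :
    EuclideanSpace ℝ (Fin N) :=
  ⟪x, y⟫ • x + ∑ p, ⟪act (A p) x, y⟫ • act (A p) x

lemma inner_fkmProj_self (A : Fin (m - 1) → Matrix (Fin N) (Fin N) ℝ)
    (x y : EuclideanSpace ℝ (Fin N)) : ⟪fkmProj A x y, y⟫ = FKM A x y := by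
  simp only [fkmProj, FKM, inner_add_left, sum_inner, real_inner_smul_left, sq]

lemma IsSkewCliffordSystem.norm_fkmProj_sq {A : Fin (m - 1) → Matrix (Fin N) (Fin N) ℝ}
    (hA : IsSkewCliffordSystem A) {x : EuclideanSpace ℝ (Fin N)} (hx : ‖x‖ = 1)
    (y : EuclideanSpace ℝ (Fin N)) : ‖fkmProj A x y‖ ^ 2 = FKM A x y := by
  have hx_perp : ⟪x, ∑ p, ⟪act (A p) x, y⟫ • act (A p) x⟫ = 0 := by
    rw [inner_sum]
    exact Finset.sum_eq_zero fun p _ => by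
      rw [real_inner_smul_right, real_inner_comm (act (A p) x), hA.inner_act_self, mul_zero]
  have hsum : ‖∑ p, ⟪act (A p) x, y⟫ • act (A p) x‖ ^ 2 = ∑ p, ⟪act (A p) x, y⟫ ^ 2 := by
    rw [← real_inner_self_eq_norm_sq, (hA.orthonormal_act hx).inner_sum]
    simp only [conj_trivial, sq]
  rw [fkmProj, norm_add_sq_real, real_inner_smul_left, hx_perp, hsum, norm_smul, hx, FKM,
    Real.norm_eq_abs, mul_one, sq_abs, mul_zero, mul_zero, add_zero]

lemma fkmProj_transpose_swap (A : Fin (m - 1) → Matrix (Fin N) (Fin N) ℝ)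
    (x y : EuclideanSpace ℝ (Fin N)) :
    fkmProj (fun p => (A p)ᵀ) y x = ⟪x, y⟫ • y + ∑ p, ⟪act (A p) x, y⟫ • act (A p)ᵀ y := by
  simp only [fkmProj, inner_act_left, real_inner_comm x]

lemma FKM_transpose_swap (A : Fin (m - 1) → Matrix (Fin N) (Fin N) ℝ)
    (x y : EuclideanSpace ℝ (Fin N)) : FKM (fun p => (A p)ᵀ) y x = FKM A x y := by
  simp only [FKM, inner_act_left, real_inner_comm x]

lemma IsSkewCliffordSystem.norm_fkmProj_sub_smul_sq
    {A : Fin (m - 1) → Matrix (Fin N) (Fin N) ℝ} (hA : IsSkewCliffordSystem A)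
    {x y : EuclideanSpace ℝ (Fin N)} (hx : ‖x‖ = 1) (hy : ‖y‖ = 1) :
    ‖fkmProj A x y - FKM A x y • y‖ ^ 2 = FKM A x y * (1 - FKM A x y) := by
  rw [← hA.norm_fkmProj_sq hx y]
  exact norm_sub_smul_sq_of_inner_eq_norm_sq hy (by rw [inner_fkmProj_self, hA.norm_fkmProj_sq hx])

lemma inner_fkmProj_sub_smul_self (A : Fin (m - 1) → Matrix (Fin N) (Fin N) ℝ)
    (x : EuclideanSpace ℝ (Fin N)) {y : EuclideanSpace ℝ (Fin N)} (hy : ‖y‖ = 1) :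
    ⟪fkmProj A x y - FKM A x y • y, y⟫ = 0 := by
  rw [inner_sub_left, inner_fkmProj_self, real_inner_smul_left, real_inner_self_eq_norm_sq, hy]
  ring

end Projection

theorem stmt8_general (n m : ℕ)
    (A : Fin (m - 1) → Matrix (Fin (n + 1)) (Fin (n + 1)) ℝ)
    (hA : IsSkewCliffordSystem A)
    (c : ℝ)
    (x y : EuclideanSpace ℝ (Fin (n + 1))) (hx : ‖x‖ = 1) (hy : ‖y‖ = 1)
    (hF : FKM A x y = c)
    (Y : WithLp 2 (EuclideanSpace ℝ (Fin (n + 1)) × EuclideanSpace ℝ (Fin (n + 1))))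
    (hY : Y = (WithLp.equiv 2 _).symm
      (⟪x, y⟫ • y + (∑ p, ⟪act (A p) x, y⟫ • act (A p)ᵀ y) - c • x,
       ⟪x, y⟫ • x + (∑ p, ⟪act (A p) x, y⟫ • act (A p) x) - c • y)) :
    ‖Y‖ ^ 2 = 2 * c * (1 - c) ∧
    ⟪Y, (WithLp.equiv 2 _).symm (x, y)⟫ = 0 ∧
    ⟪Y, (WithLp.equiv 2 _).symm (x, -y)⟫ = 0 := by
  subst hF hY
  have hfst_norm := hA.transpose.norm_fkmProj_sub_smul_sq hy hx
  have hfst_inner := inner_fkmProj_sub_smul_self (fun p => (A p)ᵀ) y hx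
  rw [fkmProj_transpose_swap, FKM_transpose_swap] at hfst_norm hfst_inner
  have hsnd_norm := hA.norm_fkmProj_sub_smul_sq hx hy
  have hsnd_inner := inner_fkmProj_sub_smul_self A x hy
  rw [fkmProj] at hsnd_norm hsnd_inner
  refine ⟨?_, ?_, ?_⟩
  · rw [WithLp.prod_norm_sq_eq_of_L2, WithLp.equiv_symm_apply, WithLp.toLp_fst, WithLp.toLp_snd,
      hfst_norm, hsnd_norm]
    ring
  · simp only [WithLp.prod_inner_apply, WithLp.equiv_symm_apply, hfst_inner,
      hsnd_inner, add_zero]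
  · simp only [WithLp.prod_inner_apply, WithLp.equiv_symm_apply, inner_neg_right,
      hfst_inner, hsnd_inner, neg_zero, add_zero]

/-- with `c = (m−1)/(n−1)`, `‖x‖ = ‖y‖ = 1`, `F(x,y) = c`, `B_p = ⟨A_p x, y⟩`
and `Y = (⟨x,y⟩y + Σ_p B_p A_pᵀ y − c x, ⟨x,y⟩x + Σ_p B_p A_p x − c y)`, one has
`‖Y‖² = 2c(1−c)` and `Y ⟂ (x,y)`, `Y ⟂ (x,−y)` (in `ℝ^{n+1} × ℝ^{n+1}` with the
Euclidean product metric). -/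
theorem stmt8 (n m : ℕ) (hm : 2 ≤ m) (hmn : m < n)
    (A : Fin (m - 1) → Matrix (Fin (n + 1)) (Fin (n + 1)) ℝ)
    (hA : IsSkewCliffordSystem A)
    (c : ℝ) (hc : c = ((m : ℝ) - 1) / ((n : ℝ) - 1))
    (x y : EuclideanSpace ℝ (Fin (n + 1))) (hx : ‖x‖ = 1) (hy : ‖y‖ = 1)
    (hF : FKM A x y = c)
    (Y : WithLp 2 (EuclideanSpace ℝ (Fin (n + 1)) × EuclideanSpace ℝ (Fin (n + 1))))
    (hY : Y = (WithLp.equiv 2 _).symm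
      (⟪x, y⟫ • y + (∑ p, ⟪act (A p) x, y⟫ • act (A p)ᵀ y) - c • x,
       ⟪x, y⟫ • x + (∑ p, ⟪act (A p) x, y⟫ • act (A p) x) - c • y)) :
    ‖Y‖ ^ 2 = 2 * c * (1 - c) ∧
    ⟪Y, (WithLp.equiv 2 _).symm (x, y)⟫ = 0 ∧
    ⟪Y, (WithLp.equiv 2 _).symm (x, -y)⟫ = 0 :=
  stmt8_general n m A hA c x y hx hy hF Y hY
end
end
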